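/- Suppose X* is an optimal solution of min_{X∈F_{n,k}} f(X) satisfying the eigen-gap assumption with parameter δ > 0. Then for any X ∈ F_{n,k} and any V ∈ argmin_{P∈P_{n,k}} ⟨P, ∇f(X)⟩, it holds that ‖V − X*‖_F² ≤ 16·β²·(f(X) − f(X*))/δ³. In particular, this bound holds for the rank-k matrices V_t produced at every iteration t ≥ 1 of the Frank-Wolfe method applied to min_{X∈F_{n,k}} f(X). -/

import Mathlib

open Matrix

noncomputable def frobNorm {m : ℕ} (A : Matrix (Fin m) (Fin m) ℝ) : ℝ :=
  Real.sqrt (∑ i, ∑ j, (A i j) ^ 2)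

/-- `eigval A j` is the `j`-th largest eigenvalue (1-indexed) of the symmetric matrix `A`. -/
noncomputable def eigval {m : ℕ} (A : Matrix (Fin m) (Fin m) ℝ) (j : ℕ) : ℝ :=
  if h : A.IsHermitian then
    if hj : m - j < m then (h.eigenvalues ∘ Tuple.sort h.eigenvalues) ⟨m - j, hj⟩ else 0
  else 0

/-- spectral norm: largest singular value. -/
noncomputable def specNorm {m : ℕ} (A : Matrix (Fin m) (Fin m) ℝ) : ℝ :=
  Real.sqrt (eigval (Aᵀ * A) 1)

/-- `P_{n,k}`: rank-`k` orthogonal projection matrices. -/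
def ProjSet (n k : ℕ) : Set (Matrix (Fin n) (Fin n) ℝ) :=
  {X | ∃ Q : Matrix (Fin n) (Fin k) ℝ, Qᵀ * Q = 1 ∧ X = Q * Qᵀ}

/-- The Fantope `F_{n,k}`. -/
def Fantope (n k : ℕ) : Set (Matrix (Fin n) (Fin n) ℝ) :=
  {X | X.IsSymm ∧ X.PosSemidef ∧ (1 - X).PosSemidef ∧ X.trace = (k : ℝ)}

/-!
Let `G = ∇f(X*)` and let `P` project onto the eigenvectors of the `k` smallest eigenvalues of `G`.
In an eigenbasis of `G` one sees that `⟨G, Y - P⟩ ≥ δ (k - ⟨P, Y⟩)` on the Fantope, while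
`‖Y - P‖² ≤ 2 (k - ⟨P, Y⟩)` there because `Y² ⪯ Y`; so `⟨G, Y - P⟩ ≥ δ/2 ‖Y - P‖²`. First-order
optimality of `X*` then forces `X* = P`. Being a rank-`k` projection, `X*` competes with `V`, so
`⟨∇f(X), V - X*⟩ ≤ 0` and `δ/2 ‖V - X*‖² ≤ ⟨G - ∇f(X), V - X*⟩ ≤ β ‖X - X*‖ ‖V - X*‖`, while
convexity gives `δ/2 ‖X - X*‖² ≤ f(X) - f(X*)`.
-/

section FrobeniusNorm

variable {m : ℕ}

lemma frobNorm_nonneg (A : Matrix (Fin m) (Fin m) ℝ) : 0 ≤ frobNorm A :=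
  Real.sqrt_nonneg _

lemma frobNorm_transpose (A : Matrix (Fin m) (Fin m) ℝ) : frobNorm Aᵀ = frobNorm A := by
  rw [frobNorm, frobNorm, Finset.sum_comm]
  rfl

lemma frobNorm_sq (A : Matrix (Fin m) (Fin m) ℝ) : frobNorm A ^ 2 = (Aᵀ * A).trace := by
  rw [frobNorm, Real.sq_sqrt (by positivity), trace, Finset.sum_comm]
  simp [mul_apply, sq]

lemma frobNorm_smul (c : ℝ) (A : Matrix (Fin m) (Fin m) ℝ) :
    frobNorm (c • A) = |c| * frobNorm A := by
  simp only [frobNorm, Matrix.smul_apply, smul_eq_mul, mul_pow, ← Finset.mul_sum]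
  rw [Real.sqrt_mul (sq_nonneg c), Real.sqrt_sq_eq_abs]

lemma frobNorm_sub_comm (A B : Matrix (Fin m) (Fin m) ℝ) :
    frobNorm (A - B) = frobNorm (B - A) := by
  rw [← neg_sub, ← neg_one_smul ℝ, frobNorm_smul, abs_neg, abs_one, one_mul]

lemma trace_mul_le_frobNorm_mul (A B : Matrix (Fin m) (Fin m) ℝ) :
    (A * B).trace ≤ frobNorm A * frobNorm B := by
  rw [← frobNorm_transpose B, frobNorm, frobNorm, ← Finset.sum_product', ← Finset.sum_product']
  calc (A * B).trace = ∑ p ∈ Finset.univ ×ˢ Finset.univ, A p.1 p.2 * Bᵀ p.1 p.2 := by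
        simp [trace, mul_apply, Fintype.sum_prod_type]
    _ ≤ _ := Real.sum_mul_le_sqrt_mul_sqrt _ _ _

lemma frobNorm_eq_zero_iff {A : Matrix (Fin m) (Fin m) ℝ} : frobNorm A = 0 ↔ A = 0 := by
  rw [← pow_eq_zero_iff two_ne_zero, frobNorm_sq, ← conjTranspose_eq_transpose_of_trivial,
    trace_conjTranspose_mul_self_eq_zero_iff]

end FrobeniusNorm

section Fantope

variable {n k : ℕ}

open scoped MatrixOrder in
lemma trace_mul_nonneg_of_posSemidef {A B : Matrix (Fin n) (Fin n) ℝ} (hA : A.PosSemidef)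
    (hB : B.PosSemidef) : 0 ≤ (A * B).trace := by
  obtain ⟨C, rfl⟩ := CStarAlgebra.nonneg_iff_eq_star_mul_self.mp hB.nonneg
  rw [← Matrix.mul_assoc, trace_mul_cycle, star_eq_conjTranspose]
  exact (hA.mul_mul_conjTranspose_same C).trace_nonneg

lemma trace_mul_self_le_trace {Y : Matrix (Fin n) (Fin n) ℝ} (hY : Y ∈ Fantope n k) :
    (Y * Y).trace ≤ Y.trace := by
  have h := trace_mul_nonneg_of_posSemidef hY.2.1 hY.2.2.1
  rw [Matrix.mul_sub, Matrix.mul_one, trace_sub] at h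
  linarith

lemma diag_nonneg_of_mem_fantope {Y : Matrix (Fin n) (Fin n) ℝ} (hY : Y ∈ Fantope n k)
    (i : Fin n) : 0 ≤ Y i i :=
  hY.2.1.diag_nonneg

lemma diag_le_one_of_mem_fantope {Y : Matrix (Fin n) (Fin n) ℝ} (hY : Y ∈ Fantope n k)
    (i : Fin n) : Y i i ≤ 1 := by
  simpa using hY.2.2.1.diag_nonneg (i := i)

lemma convex_fantope : Convex ℝ (Fantope n k) := by
  rintro X ⟨hXs, hX, hX', hXtr⟩ Y ⟨hYs, hY, hY', hYtr⟩ a b ha hb hab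
  have hcompl : 1 - (a • X + b • Y) = a • (1 - X) + b • (1 - Y) := by
    obtain rfl : b = 1 - a := by linarith
    module
  refine ⟨(hXs.smul a).add (hYs.smul b), (hX.smul ha).add (hY.smul hb), ?_, ?_⟩
  · rw [hcompl]
    exact (hX'.smul ha).add (hY'.smul hb)
  · rw [trace_add, trace_smul, trace_smul, hXtr, hYtr, smul_eq_mul, smul_eq_mul, ← add_mul, hab,
      one_mul]

lemma mul_self_of_mem_projSet {P : Matrix (Fin n) (Fin n) ℝ} (hP : P ∈ ProjSet n k) :
    P * P = P := by
  obtain ⟨Q, hQ, rfl⟩ := hP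
  rw [Matrix.mul_assoc, ← Matrix.mul_assoc Qᵀ, hQ, Matrix.one_mul]

lemma projSet_subset_fantope : ProjSet n k ⊆ Fantope n k := by
  intro P hP
  obtain ⟨Q, hQ, rfl⟩ := id hP
  have hsymm : (Q * Qᵀ).IsSymm := by
    rw [IsSymm, transpose_mul, transpose_transpose]
  have hcompl : 1 - Q * Qᵀ = (1 - Q * Qᵀ)ᴴ * (1 - Q * Qᵀ) := by
    rw [conjTranspose_eq_transpose_of_trivial, transpose_sub, transpose_one, hsymm.eq, sub_mul,
      mul_sub, mul_sub, mul_self_of_mem_projSet hP]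
    simp
  refine ⟨hsymm, ?_, ?_, ?_⟩
  · simpa [conjTranspose_eq_transpose_of_trivial] using posSemidef_self_mul_conjTranspose Q
  · rw [hcompl]
    exact posSemidef_conjTranspose_mul_self _
  · rw [trace_mul_comm, hQ, trace_one, Fintype.card_fin]

lemma frobNorm_sub_sq_le {Y P : Matrix (Fin n) (Fin n) ℝ} (hY : Y ∈ Fantope n k)
    (hP : P ∈ ProjSet n k) : frobNorm (Y - P) ^ 2 ≤ 2 * (k - (P * Y).trace) := by
  obtain ⟨hPs, -, -, hPtr⟩ := projSet_subset_fantope hP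
  have hYY := trace_mul_self_le_trace hY
  rw [frobNorm_sq, transpose_sub, hY.1.eq, hPs.eq, sub_mul, mul_sub, mul_sub,
    mul_self_of_mem_projSet hP, trace_sub, trace_sub, trace_sub, trace_mul_comm Y P, hPtr]
  linarith [hY.2.2.2]

end Fantope

section OrthogonalConjugation

variable {n k : ℕ} {W : Matrix (Fin n) (Fin n) ℝ}

lemma trace_conj_diagonal_mul (W : Matrix (Fin n) (Fin n) ℝ) (d : Fin n → ℝ)
    (Z : Matrix (Fin n) (Fin n) ℝ) :
    (W * diagonal d * Wᵀ * Z).trace = ∑ i, d i * (Wᵀ * Z * W) i i := by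
  rw [Matrix.mul_assoc (W * diagonal d), trace_mul_comm, ← Matrix.mul_assoc, trace_mul_comm]
  simp [trace, diagonal_mul]

lemma conj_mem_fantope (hW : W ∈ orthogonalGroup (Fin n) ℝ) {Y : Matrix (Fin n) (Fin n) ℝ}
    (hY : Y ∈ Fantope n k) : Wᵀ * Y * W ∈ Fantope n k := by
  obtain ⟨hYs, hY, hY', hYtr⟩ := hY
  have hcompl : 1 - Wᵀ * Y * W = Wᵀ * (1 - Y) * W := by
    rw [Matrix.mul_sub, Matrix.sub_mul, Matrix.mul_one, (mem_orthogonalGroup_iff' _ _).1 hW]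
  refine ⟨?_, ?_, ?_, ?_⟩
  · rw [IsSymm, transpose_mul, transpose_mul, transpose_transpose, hYs.eq, Matrix.mul_assoc]
  · simpa [conjTranspose_eq_transpose_of_trivial] using hY.conjTranspose_mul_mul_same W
  · simpa [conjTranspose_eq_transpose_of_trivial, hcompl] using hY'.conjTranspose_mul_mul_same W
  · rw [trace_mul_cycle, (mem_orthogonalGroup_iff _ _).1 hW, Matrix.one_mul, hYtr]

lemma conj_mem_projSet (hW : W ∈ orthogonalGroup (Fin n) ℝ) {P : Matrix (Fin n) (Fin n) ℝ}
    (hP : P ∈ ProjSet n k) : W * P * Wᵀ ∈ ProjSet n k := by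
  obtain ⟨Q, hQ, rfl⟩ := hP
  refine ⟨W * Q, ?_, ?_⟩
  · rw [transpose_mul, Matrix.mul_assoc, ← Matrix.mul_assoc Wᵀ,
      (mem_orthogonalGroup_iff' _ _).1 hW, Matrix.one_mul, hQ]
  · rw [transpose_mul, Matrix.mul_assoc, Matrix.mul_assoc, Matrix.mul_assoc]

lemma transpose_mul_conj (hW : W ∈ orthogonalGroup (Fin n) ℝ) (A : Matrix (Fin n) (Fin n) ℝ) :
    Wᵀ * (W * A * Wᵀ) * W = A := by
  have hWW := (mem_orthogonalGroup_iff' _ _).1 hW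
  rw [Matrix.mul_assoc W, ← Matrix.mul_assoc Wᵀ, hWW, Matrix.one_mul, Matrix.mul_assoc, hWW,
    Matrix.mul_one]

end OrthogonalConjugation

section Spectral

variable {m : ℕ}

noncomputable def sortedEigenvalues {A : Matrix (Fin m) (Fin m) ℝ} (hA : A.IsHermitian) :
    Fin m → ℝ :=
  hA.eigenvalues ∘ Tuple.sort hA.eigenvalues

lemma monotone_sortedEigenvalues {A : Matrix (Fin m) (Fin m) ℝ} (hA : A.IsHermitian) :
    Monotone (sortedEigenvalues hA) :=
  Tuple.monotone_sort _

lemma eigval_sub_eq_sortedEigenvalues {A : Matrix (Fin m) (Fin m) ℝ} (hA : A.IsHermitian)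
    (i : Fin m) : eigval A (m - i) = sortedEigenvalues hA i := by
  rw [eigval, dif_pos hA, dif_pos (by omega)]
  exact congrArg _ (Fin.ext (by simp; omega))

lemma exists_orthogonal_eq_conj_diagonal_sortedEigenvalues {A : Matrix (Fin m) (Fin m) ℝ}
    (hA : A.IsHermitian) :
    ∃ W ∈ orthogonalGroup (Fin m) ℝ, A = W * diagonal (sortedEigenvalues hA) * Wᵀ := by
  set U : Matrix (Fin m) (Fin m) ℝ := (hA.eigenvectorUnitary : Matrix (Fin m) (Fin m) ℝ)
  have hU : U ∈ orthogonalGroup (Fin m) ℝ := hA.eigenvectorUnitary.2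
  have hA' : A = U * diagonal hA.eigenvalues * Uᵀ := by
    conv_lhs => rw [hA.spectral_theorem]
    simp [U, Unitary.conjStarAlgAut_apply, star_eq_conjTranspose,
      conjTranspose_eq_transpose_of_trivial]
  set σ := Tuple.sort hA.eigenvalues
  refine ⟨U.submatrix id σ, ?_, ?_⟩
  · rw [mem_orthogonalGroup_iff, transpose_submatrix, submatrix_mul_equiv, submatrix_id_id,
      ← mem_orthogonalGroup_iff]
    exact hU
  · rw [sortedEigenvalues, ← submatrix_diagonal_equiv, transpose_submatrix, submatrix_mul_equiv,
      submatrix_mul_equiv, submatrix_id_id, ← hA']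

end Spectral

section ProjectionOntoFirstCoordinates

variable {n k : ℕ}

def firstIndicator (n k : ℕ) : Fin n → ℝ := fun i => if (i : ℕ) < k then 1 else 0

lemma sum_firstIndicator (hkn : k ≤ n) : ∑ i, firstIndicator n k i = k := by
  simp [firstIndicator, Finset.sum_boole, Fin.card_filter_val_lt, hkn]

lemma diagonal_firstIndicator_mem_projSet (hkn : k ≤ n) :
    diagonal (firstIndicator n k) ∈ ProjSet n k := by
  set E := (1 : Matrix (Fin n) (Fin n) ℝ).submatrix id (Fin.castLE hkn)
  refine ⟨E, ?_, ?_⟩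
  · rw [transpose_submatrix, ← submatrix_mul _ _ _ _ _ Function.bijective_id, transpose_one,
      one_mul, submatrix_one _ (Fin.castLE_injective hkn)]
  ext i j
  simp only [E, mul_apply, transpose_apply, submatrix_apply, diagonal_apply, firstIndicator]
  by_cases hi : (i : ℕ) < k
  · rw [Finset.sum_eq_single ⟨i, hi⟩]
    · simp [one_apply, hi, eq_comm]
    · intro l _ hl
      rw [one_apply_ne, zero_mul]
      exact fun h => hl (Fin.ext (congrArg Fin.val h).symm)
    · simp
  · rw [Finset.sum_eq_zero]
    · simp [hi]
    · intro l _
      rw [one_apply_ne, zero_mul]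
      rintro rfl
      exact hi l.2

lemma gap_mul_sum_le_sum_mul_sub_firstIndicator (hk : 0 < k) (hkn : k < n)
    {μ d : Fin n → ℝ} (hμ : Monotone μ) (hd0 : ∀ i, 0 ≤ d i) (hd1 : ∀ i, d i ≤ 1)
    (hd : ∑ i, d i = k) :
    (μ ⟨k, hkn⟩ - μ ⟨k - 1, by omega⟩) * ∑ i, (1 - firstIndicator n k i) * d i ≤
      ∑ i, μ i * (d i - firstIndicator n k i) := by
  set a := μ ⟨k - 1, by omega⟩
  set b := μ ⟨k, hkn⟩
  have hterm : ∀ i, a * (d i - firstIndicator n k i) + (b - a) * ((1 - firstIndicator n k i) * d i)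
      ≤ μ i * (d i - firstIndicator n k i) := by
    intro i
    by_cases hi : (i : ℕ) < k
    · have : μ i ≤ a := hμ (Fin.mk_le_mk.2 (by omega))
      simp only [firstIndicator, hi, if_true]
      nlinarith [hd1 i]
    · have : b ≤ μ i := hμ (Fin.mk_le_mk.2 (by omega))
      simp only [firstIndicator, hi, if_false]
      nlinarith [hd0 i]
  calc (b - a) * ∑ i, (1 - firstIndicator n k i) * d i
      = ∑ i, (a * (d i - firstIndicator n k i) + (b - a) * ((1 - firstIndicator n k i) * d i)) := by
        rw [Finset.sum_add_distrib, ← Finset.mul_sum, ← Finset.mul_sum, Finset.sum_sub_distrib, hd,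
          sum_firstIndicator hkn.le, sub_self, mul_zero, zero_add]
    _ ≤ _ := Finset.sum_le_sum fun i _ => hterm i

end ProjectionOntoFirstCoordinates

theorem exists_mem_projSet_quadratic_growth {n k : ℕ} (hk : 0 < k) (hkn : k < n)
    {G : Matrix (Fin n) (Fin n) ℝ} (hG : G.IsSymm) {δ : ℝ}
    (hgap : δ ≤ eigval G (n - k) - eigval G (n - k + 1)) :
    ∃ P ∈ ProjSet n k, ∀ Y ∈ Fantope n k, δ / 2 * frobNorm (Y - P) ^ 2 ≤ (G * (Y - P)).trace := by
  have hH : G.IsHermitian := by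
    rw [IsHermitian, conjTranspose_eq_transpose_of_trivial, hG.eq]
  obtain ⟨W, hW, hGW⟩ := exists_orthogonal_eq_conj_diagonal_sortedEigenvalues hH
  set μ := sortedEigenvalues hH
  have hμgap : δ ≤ μ ⟨k, hkn⟩ - μ ⟨k - 1, by omega⟩ := by
    have hk1 : eigval G (n - k + 1) = μ ⟨k - 1, by omega⟩ := by
      rw [show n - k + 1 = n - (k - 1) by omega]
      exact eigval_sub_eq_sortedEigenvalues hH ⟨k - 1, by omega⟩
    rwa [hk1, show eigval G (n - k) = μ ⟨k, hkn⟩ from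
      eigval_sub_eq_sortedEigenvalues hH ⟨k, hkn⟩] at hgap
  have hμgap0 : 0 ≤ μ ⟨k, hkn⟩ - μ ⟨k - 1, by omega⟩ :=
    sub_nonneg.2 (monotone_sortedEigenvalues hH (Fin.mk_le_mk.2 (by omega)))
  set e := firstIndicator n k
  set P := W * diagonal e * Wᵀ
  have hP : P ∈ ProjSet n k := conj_mem_projSet hW (diagonal_firstIndicator_mem_projSet hkn.le)
  refine ⟨P, hP, fun Y hY => ?_⟩
  set M := Wᵀ * Y * W
  have hM : M ∈ Fantope n k := conj_mem_fantope hW hY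
  have hlin : (G * (Y - P)).trace = ∑ i, μ i * (M i i - e i) := by
    rw [hGW, trace_conj_diagonal_mul, Matrix.mul_sub, Matrix.sub_mul, transpose_mul_conj hW]
    simp [M]
  have hPY : (k : ℝ) - (P * Y).trace = ∑ i, (1 - e i) * M i i := by
    rw [trace_conj_diagonal_mul, ← hM.2.2.2, trace, ← Finset.sum_sub_distrib]
    simp only [diag, sub_mul, one_mul, M]
  have hgrowth := gap_mul_sum_le_sum_mul_sub_firstIndicator hk hkn (monotone_sortedEigenvalues hH)
    (diag_nonneg_of_mem_fantope hM) (diag_le_one_of_mem_fantope hM) hM.2.2.2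
  have hfrob := frobNorm_sub_sq_le hY hP
  rw [hPY] at hfrob
  rw [hlin]
  nlinarith [sq_nonneg (frobNorm (Y - P))]

lemma eq_of_quadratic_growth_of_trace_nonneg {n : ℕ} {S : Set (Matrix (Fin n) (Fin n) ℝ)}
    {G P X : Matrix (Fin n) (Fin n) ℝ} {δ : ℝ} (hδ : 0 < δ) (hX : X ∈ S)
    (hgrowth : ∀ Y ∈ S, δ / 2 * frobNorm (Y - P) ^ 2 ≤ (G * (Y - P)).trace)
    (hstat : 0 ≤ (G * (P - X)).trace) : X = P := by
  have h := hgrowth X hX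
  rw [← neg_sub X P, Matrix.mul_neg, trace_neg] at hstat
  rw [← sub_eq_zero, ← frobNorm_eq_zero_iff, ← pow_eq_zero_iff two_ne_zero]
  nlinarith [sq_nonneg (frobNorm (X - P))]

lemma nonneg_of_forall_neg_mul_le {a c : ℝ} (h : ∀ t ∈ Set.Ioc (0 : ℝ) 1, -(a * t) ≤ c) :
    0 ≤ c := by
  have hlim : Filter.Tendsto (fun t : ℝ => -(a * t)) (nhdsWithin 0 (Set.Ioi 0)) (nhds 0) := by
    have : Continuous fun t : ℝ => -(a * t) := by fun_prop
    simpa using this.continuousWithinAt (s := Set.Ioi 0) (x := 0) |>.tendsto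
  exact le_of_tendsto hlim (Filter.eventually_of_mem (Ioc_mem_nhdsGT one_pos) h)

theorem trace_grad_mul_sub_nonneg_of_isMinOn {n : ℕ} {S : Set (Matrix (Fin n) (Fin n) ℝ)}
    (hS : Convex ℝ S) (hSsymm : ∀ X ∈ S, X.IsSymm)
    {f : Matrix (Fin n) (Fin n) ℝ → ℝ} {grad : Matrix (Fin n) (Fin n) ℝ → Matrix (Fin n) (Fin n) ℝ}
    {β : ℝ}
    (hconv : ∀ X Y : Matrix (Fin n) (Fin n) ℝ, X.IsSymm → Y.IsSymm →
      f X + (grad X * (Y - X)).trace ≤ f Y)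
    (hsmooth : ∀ X Y : Matrix (Fin n) (Fin n) ℝ, X.IsSymm → Y.IsSymm →
      frobNorm (grad X - grad Y) ≤ β * frobNorm (X - Y))
    {Xstar : Matrix (Fin n) (Fin n) ℝ} (hXstar : Xstar ∈ S) (hmin : IsMinOn f S Xstar)
    {Y : Matrix (Fin n) (Fin n) ℝ} (hY : Y ∈ S) :
    0 ≤ (grad Xstar * (Y - Xstar)).trace := by
  set d := Y - Xstar
  refine nonneg_of_forall_neg_mul_le (a := β * frobNorm d ^ 2) fun t ⟨ht0, ht1⟩ => ?_
  set Z := Xstar + t • d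
  have hZ : Z ∈ S := hS.add_smul_sub_mem hXstar hY ⟨ht0.le, ht1⟩
  have hdesc : 0 ≤ (grad Z * d).trace := by
    have hsupp := hconv Z Xstar (hSsymm Z hZ) (hSsymm Xstar hXstar)
    rw [show Xstar - Z = (-t) • d by simp [Z], Matrix.mul_smul, trace_smul, smul_eq_mul] at hsupp
    have := isMinOn_iff.1 hmin Z hZ
    exact (mul_nonneg_iff_of_pos_left ht0).1 (by linarith)
  have hlip : ((grad Z - grad Xstar) * d).trace ≤ β * frobNorm d ^ 2 * t :=
    calc ((grad Z - grad Xstar) * d).trace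
        ≤ frobNorm (grad Z - grad Xstar) * frobNorm d := trace_mul_le_frobNorm_mul _ _
      _ ≤ β * frobNorm (Z - Xstar) * frobNorm d :=
        mul_le_mul_of_nonneg_right (hsmooth Z Xstar (hSsymm Z hZ) (hSsymm Xstar hXstar))
          (frobNorm_nonneg d)
      _ = β * frobNorm d ^ 2 * t := by
        rw [show Z - Xstar = t • d by simp [Z], frobNorm_smul, abs_of_pos ht0]
        ring
  rw [Matrix.sub_mul, trace_sub] at hlip
  linarith

lemma cube_mul_sq_le_of_quadratic_growth {a b β δ F : ℝ} (hδ : 0 < δ) (ha : 0 ≤ a)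
    (hab : δ / 2 * a ^ 2 ≤ β * b * a) (hbF : δ / 2 * b ^ 2 ≤ F) :
    δ ^ 3 * a ^ 2 ≤ 8 * β ^ 2 * F := by
  rcases ha.eq_or_lt with rfl | hpos
  · have hF : 0 ≤ F := le_trans (by positivity) hbF
    simp only [ne_eq, OfNat.ofNat_ne_zero, not_false_eq_true, zero_pow, mul_zero]
    positivity
  have hδa : δ * a ≤ 2 * (β * b) := by nlinarith
  have hsq : (δ * a) ^ 2 ≤ 4 * β ^ 2 * b ^ 2 := by nlinarith [mul_nonneg hδ.le ha]
  nlinarith [sq_nonneg β]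

theorem stmt5_general {n k : ℕ} (hk : 0 < k) (hkn : k < n)
    (f : Matrix (Fin n) (Fin n) ℝ → ℝ)
    (grad : Matrix (Fin n) (Fin n) ℝ → Matrix (Fin n) (Fin n) ℝ)
    (β : ℝ)
    (hgradSymm : ∀ X : Matrix (Fin n) (Fin n) ℝ, (grad X).IsSymm)
    (hconv : ∀ X Y : Matrix (Fin n) (Fin n) ℝ, X.IsSymm → Y.IsSymm →
      f X + (grad X * (Y - X)).trace ≤ f Y)
    (hsmooth : ∀ X Y : Matrix (Fin n) (Fin n) ℝ, X.IsSymm → Y.IsSymm →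
      frobNorm (grad X - grad Y) ≤ β * frobNorm (X - Y))
    (Xstar : Matrix (Fin n) (Fin n) ℝ)
    (hXstarMem : Xstar ∈ Fantope n k)
    (hXstarOpt : ∀ X ∈ Fantope n k, f Xstar ≤ f X)
    (δ : ℝ) (hδ : 0 < δ)
    (hgap : δ ≤ eigval (grad Xstar) (n - k) - eigval (grad Xstar) (n - k + 1))
    :
    ∀ X ∈ Fantope n k, ∀ V ∈ ProjSet n k,
      (∀ P ∈ ProjSet n k, (V * grad X).trace ≤ (P * grad X).trace) →
      frobNorm (V - Xstar) ^ 2 ≤ 16 * β ^ 2 * (f X - f Xstar) / δ ^ 3 := by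
  intro X hX V hV hVmin
  obtain ⟨P, hP, hgrowth⟩ := exists_mem_projSet_quadratic_growth hk hkn (hgradSymm Xstar) hgap
  obtain rfl : Xstar = P := eq_of_quadratic_growth_of_trace_nonneg hδ hXstarMem hgrowth <|
    trace_grad_mul_sub_nonneg_of_isMinOn convex_fantope (fun _ hZ => hZ.1) hconv hsmooth
      hXstarMem (isMinOn_iff.2 hXstarOpt) (projSet_subset_fantope hP)
  have hX_growth : δ / 2 * frobNorm (X - Xstar) ^ 2 ≤ f X - f Xstar := by
    linarith [hgrowth X hX, hconv Xstar X hXstarMem.1 hX.1]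
  have hV_growth : δ / 2 * frobNorm (V - Xstar) ^ 2 ≤
      β * frobNorm (X - Xstar) * frobNorm (V - Xstar) := by
    have hVX : (grad X * (V - Xstar)).trace ≤ 0 := by
      rw [Matrix.mul_sub, trace_sub, trace_mul_comm, trace_mul_comm (grad X)]
      linarith [hVmin Xstar hP]
    calc δ / 2 * frobNorm (V - Xstar) ^ 2
        ≤ (grad X * (V - Xstar)).trace + ((grad Xstar - grad X) * (V - Xstar)).trace := by
          rw [Matrix.sub_mul, trace_sub]
          linarith [hgrowth V (projSet_subset_fantope hV)]
      _ ≤ frobNorm (grad Xstar - grad X) * frobNorm (V - Xstar) := by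
          linarith [trace_mul_le_frobNorm_mul (grad Xstar - grad X) (V - Xstar)]
      _ ≤ β * frobNorm (X - Xstar) * frobNorm (V - Xstar) := by
          rw [frobNorm_sub_comm X]
          exact mul_le_mul_of_nonneg_right (hsmooth _ _ hXstarMem.1 hX.1) (frobNorm_nonneg _)
  have hbound := cube_mul_sq_le_of_quadratic_growth hδ (frobNorm_nonneg _) hV_growth hX_growth
  have hF : 0 ≤ f X - f Xstar := le_trans (by positivity) hX_growth
  rw [le_div_iff₀ (by positivity)]
  nlinarith [sq_nonneg β]

theorem stmt5 {n k : ℕ} (hk : 0 < k) (hkn : k < n)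
    (f : Matrix (Fin n) (Fin n) ℝ → ℝ)
    (grad : Matrix (Fin n) (Fin n) ℝ → Matrix (Fin n) (Fin n) ℝ)
    (β : ℝ) (hβ : 0 < β)
    (hgradSymm : ∀ X : Matrix (Fin n) (Fin n) ℝ, (grad X).IsSymm)
    (hconv : ∀ X Y : Matrix (Fin n) (Fin n) ℝ, X.IsSymm → Y.IsSymm →
      f X + (grad X * (Y - X)).trace ≤ f Y)
    (hsmooth : ∀ X Y : Matrix (Fin n) (Fin n) ℝ, X.IsSymm → Y.IsSymm →
      frobNorm (grad X - grad Y) ≤ β * frobNorm (X - Y))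
    (Xstar : Matrix (Fin n) (Fin n) ℝ)
    (hXstarMem : Xstar ∈ Fantope n k)
    (hXstarOpt : ∀ X ∈ Fantope n k, f Xstar ≤ f X)
    (δ : ℝ) (hδ : 0 < δ)
    (hgap : δ ≤ eigval (grad Xstar) (n - k) - eigval (grad Xstar) (n - k + 1))
    :
    ∀ X ∈ Fantope n k, ∀ V ∈ ProjSet n k,
      (∀ P ∈ ProjSet n k, (V * grad X).trace ≤ (P * grad X).trace) →
      frobNorm (V - Xstar) ^ 2 ≤ 16 * β ^ 2 * (f X - f Xstar) / δ ^ 3 :=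
  stmt5_general hk hkn f grad β hgradSymm hconv hsmooth Xstar hXstarMem hXstarOpt δ hδ hgap
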